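/- Let P be a Markov kernel on a measurable space (E, 𝓔), let μ and ν be invariant probability measures of P, and let A, B, C ∈ 𝓔 be pairwise disjoint with A ∪ B ∪ C = E, ν(A) = 0, μ(C) = 0, μ(A) > 0, μ(B) > 0, ν(B) > 0, and such that μ restricted to B and ν restricted to B are mutually equivalent. Then P(x, B) = 1 for μ-almost all x ∈ B, and the normalized restricted measures (1/μ(A)) μ|_A and (1/μ(B)) μ|_B are mutually singular invariant probability measures of P. -/

import Mathlib

/-!
On `B` the measures `μ` and `ν` have the same null sets. Invariance forbids almost every
point from jumping into a null set, so `μ`-almost every point of `B` stays out of both the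
`ν`-null set `A` and the `μ`-null set `C`: `B` is absorbing. For a finite invariant measure
the complement of an absorbing set is absorbing too, and the normalized restriction to an
absorbing set is invariant. Up to the `μ`-null set `C`, the complement of `B` is `A`.
-/

open MeasureTheory ProbabilityTheory

/-- `μ` is an invariant probability measure of the Markov kernel `P`. -/
def IsInvariantMeasure {E : Type*} [MeasurableSpace E] (P : Kernel E E)
    (μ : Measure E) : Prop :=
  ∀ A : Set E, MeasurableSet A → μ A = ∫⁻ x, P x A ∂μ

/-- Two probability measures are mutually singular if some measurable set has
full measure for the first and zero measure for the second. -/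
def MutuallySingularMeasures {E : Type*} [MeasurableSpace E]
    (μ ν : Measure E) : Prop :=
  ∃ C : Set E, MeasurableSet C ∧ μ C = 1 ∧ ν C = 0

namespace IsInvariantMeasure

variable {E : Type*} [MeasurableSpace E] {P : Kernel E E} {μ : Measure E} {D : Set E}

lemma ae_kernel_eq_zero (hμ : IsInvariantMeasure P μ) (hD : MeasurableSet D)
    (hμD : μ D = 0) : ∀ᵐ x ∂μ, P x D = 0 :=
  (lintegral_eq_zero_iff (P.measurable_coe hD)).mp ((hμ D hD).symm.trans hμD)

lemma smul (hμ : IsInvariantMeasure P μ) (c : ENNReal) : IsInvariantMeasure P (c • μ) := by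
  intro S hS
  rw [Measure.smul_apply, lintegral_smul_measure, hμ S hS]

/-- Invariance splits `μ D` as `∫_D P x D + ∫_{Dᶜ} P x D`, and the first term is already `μ D`. -/
lemma ae_restrict_compl_kernel_eq_zero [IsFiniteMeasure μ] (hμ : IsInvariantMeasure P μ)
    (hD : MeasurableSet D) (habs : ∀ᵐ x ∂μ.restrict D, P x D = 1) :
    ∀ᵐ x ∂μ.restrict Dᶜ, P x D = 0 := by
  have hinside : ∫⁻ x in D, P x D ∂μ = μ D := by
    rw [lintegral_congr_ae habs, setLIntegral_one]
  have hbalance : μ D + ∫⁻ x in Dᶜ, P x D ∂μ = μ D + 0 := by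
    rw [← hinside, lintegral_add_compl _ hD, hinside, add_zero, ← hμ D hD]
  exact (lintegral_eq_zero_iff (P.measurable_coe hD)).mp
    (WithTop.add_left_cancel (measure_ne_top μ D) hbalance)

lemma ae_restrict_compl_kernel_compl_eq_one [IsFiniteMeasure μ] [IsMarkovKernel P]
    (hμ : IsInvariantMeasure P μ) (hD : MeasurableSet D)
    (habs : ∀ᵐ x ∂μ.restrict D, P x D = 1) : ∀ᵐ x ∂μ.restrict Dᶜ, P x Dᶜ = 1 := by
  filter_upwards [hμ.ae_restrict_compl_kernel_eq_zero hD habs] with x hx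
  rwa [prob_compl_eq_one_iff hD]

lemma restrict [IsFiniteMeasure μ] [IsMarkovKernel P] (hμ : IsInvariantMeasure P μ)
    (hD : MeasurableSet D) (habs : ∀ᵐ x ∂μ.restrict D, P x D = 1) :
    IsInvariantMeasure P (μ.restrict D) := by
  intro S hS
  have houtside : ∫⁻ x in Dᶜ, P x (S ∩ D) ∂μ = 0 := by
    rw [lintegral_eq_zero_iff (P.measurable_coe (hS.inter hD))]
    filter_upwards [hμ.ae_restrict_compl_kernel_eq_zero hD habs] with x hx
    exact measure_mono_null Set.inter_subset_right hx
  have hinside : ∫⁻ x in D, P x (S ∩ D) ∂μ = ∫⁻ x in D, P x S ∂μ := by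
    refine lintegral_congr_ae ?_
    filter_upwards [habs] with x hx
    exact measure_inter_conull ((prob_compl_eq_zero_iff hD).mpr hx)
  rw [Measure.restrict_apply hS, hμ _ (hS.inter hD), ← lintegral_add_compl _ hD,
    houtside, add_zero, hinside]

lemma cond [IsFiniteMeasure μ] [IsMarkovKernel P] (hμ : IsInvariantMeasure P μ)
    (hD : MeasurableSet D) (habs : ∀ᵐ x ∂μ.restrict D, P x D = 1) :
    IsInvariantMeasure P μ[|D] :=
  (hμ.restrict hD habs).smul _

end IsInvariantMeasure

lemma cond_congr_set {E : Type*} [MeasurableSpace E] {μ : Measure E} {s t : Set E}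
    (hst : s =ᵐ[μ] t) : μ[|s] = μ[|t] := by
  rw [ProbabilityTheory.cond, ProbabilityTheory.cond, measure_congr hst,
    Measure.restrict_congr_set hst]

lemma mutuallySingularMeasures_cond_of_disjoint {E : Type*} [MeasurableSpace E]
    {μ : Measure E} [IsFiniteMeasure μ] {s t : Set E} (hs : MeasurableSet s)
    (hμs : μ s ≠ 0) (hst : Disjoint s t) : MutuallySingularMeasures μ[|s] μ[|t] :=
  ⟨s, hs, cond_apply_self hμs (measure_ne_top μ s), by
    rw [cond_apply' hs, hst.symm.inter_eq, measure_empty, mul_zero]⟩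

theorem nonequivalent_invariant_measures_yield_singular_pair_general
    {E : Type*} [MeasurableSpace E] (P : Kernel E E) [IsMarkovKernel P]
    (μ ν : Measure E) [IsProbabilityMeasure μ]
    (hμ : IsInvariantMeasure P μ) (hν : IsInvariantMeasure P ν)
    (A B C : Set E) (hA : MeasurableSet A) (hB : MeasurableSet B)
    (hC : MeasurableSet C)
    (hAB : Disjoint A B) (hBC : Disjoint B C)
    (hcover : A ∪ B ∪ C = Set.univ)
    (hνA : ν A = 0) (hμC : μ C = 0)
    (hμA : 0 < μ A) (hμB : 0 < μ B)
    (hequiv : μ.restrict B ≪ ν.restrict B ∧ ν.restrict B ≪ μ.restrict B) :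
    (∀ᵐ x ∂μ, x ∈ B → P x B = 1) ∧
    IsProbabilityMeasure ((μ A)⁻¹ • μ.restrict A) ∧
    IsProbabilityMeasure ((μ B)⁻¹ • μ.restrict B) ∧
    IsInvariantMeasure P ((μ A)⁻¹ • μ.restrict A) ∧
    IsInvariantMeasure P ((μ B)⁻¹ • μ.restrict B) ∧
    MutuallySingularMeasures ((μ A)⁻¹ • μ.restrict A) ((μ B)⁻¹ • μ.restrict B) := by
  have hBc : Bᶜ = A ∪ C := by
    ext x
    have hx : x ∈ A ∪ B ∪ C := hcover ▸ Set.mem_univ x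
    constructor
    · intro hxB; rcases hx with (hxA | hxB') | hxC
      exacts [Or.inl hxA, absurd hxB' hxB, Or.inr hxC]
    · rintro (hxA | hxC) hxB
      exacts [hAB.ne_of_mem hxA hxB rfl, hBC.ne_of_mem hxB hxC rfl]
  have hA_ae : A =ᵐ[μ] (Bᶜ : Set E) := by
    rw [hBc]; exact (union_ae_eq_left_of_ae_eq_empty (ae_eq_empty.mpr hμC)).symm
  have hB_absorbing : ∀ᵐ x ∂μ.restrict B, P x B = 1 := by
    filter_upwards [hequiv.1.ae_le (ae_restrict_of_ae (hν.ae_kernel_eq_zero hA hνA)),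
      ae_restrict_of_ae (hμ.ae_kernel_eq_zero hC hμC)] with x hxA hxC
    rw [← prob_compl_eq_zero_iff hB, hBc]
    exact measure_union_null hxA hxC
  refine ⟨(ae_restrict_iff' hB).mp hB_absorbing, cond_isProbabilityMeasure hμA.ne',
    cond_isProbabilityMeasure hμB.ne', ?_, hμ.cond hB hB_absorbing,
    mutuallySingularMeasures_cond_of_disjoint hA hμA.ne' hAB⟩
  rw [show (μ A)⁻¹ • μ.restrict A = μ[|A] from rfl, cond_congr_set hA_ae]
  exact hμ.cond hB.compl (hμ.ae_restrict_compl_kernel_compl_eq_one hB hB_absorbing)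

/-- If `μ, ν` are invariant probability measures of a Markov kernel `P`, and
`A, B, C` is a measurable partition of `E` with `ν(A) = 0`, `μ(C) = 0`,
`μ(A) > 0`, `μ(B) > 0`, `ν(B) > 0`, and `μ|_B` and `ν|_B` mutually equivalent,
then `P(x,B) = 1` for μ-a.a. `x ∈ B`, and the normalized restrictions of `μ` to
`A` and to `B` are mutually singular invariant probability measures of `P`. -/
theorem nonequivalent_invariant_measures_yield_singular_pair
    {E : Type*} [MeasurableSpace E] (P : Kernel E E) [IsMarkovKernel P]
    (μ ν : Measure E) [IsProbabilityMeasure μ] [IsProbabilityMeasure ν]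
    (hμ : IsInvariantMeasure P μ) (hν : IsInvariantMeasure P ν)
    (A B C : Set E) (hA : MeasurableSet A) (hB : MeasurableSet B)
    (hC : MeasurableSet C)
    (hAB : Disjoint A B) (hAC : Disjoint A C) (hBC : Disjoint B C)
    (hcover : A ∪ B ∪ C = Set.univ)
    (hνA : ν A = 0) (hμC : μ C = 0)
    (hμA : 0 < μ A) (hμB : 0 < μ B) (hνB : 0 < ν B)
    (hequiv : μ.restrict B ≪ ν.restrict B ∧ ν.restrict B ≪ μ.restrict B) :
    (∀ᵐ x ∂μ, x ∈ B → P x B = 1) ∧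
    IsProbabilityMeasure ((μ A)⁻¹ • μ.restrict A) ∧
    IsProbabilityMeasure ((μ B)⁻¹ • μ.restrict B) ∧
    IsInvariantMeasure P ((μ A)⁻¹ • μ.restrict A) ∧
    IsInvariantMeasure P ((μ B)⁻¹ • μ.restrict B) ∧
    MutuallySingularMeasures ((μ A)⁻¹ • μ.restrict A) ((μ B)⁻¹ • μ.restrict B) :=
  nonequivalent_invariant_measures_yield_singular_pair_general P μ ν hμ hν A B C hA hB hC hAB hBC
    hcover hνA hμC hμA hμB hequiv
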